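/- arXiv:0905.0067 — 6 statements merged into one kernel-verified Lean document; each statement's English description precedes it below -/
import Mathlib

section
/- Let M ⊆ H × H be a non-empty set. There exists a bipotential b on H whose graph M(b) equals M if and only if for every x ∈ H the section M(x) = {y ∈ H : (x,y) ∈ M} is convex and closed and for every y ∈ H the section M*(y) = {x ∈ H : (x,y) ∈ M} is convex and closed. -/
open scoped RealInnerProductSpace Topology

/-- The subdifferential of an `ℝ ∪ {+∞}`-valued (i.e. `EReal`-valued, never `⊥`)
function `φ` at a point `x`. -/
def ESubdiff {H : Type*} [NormedAddCommGroup H] [InnerProductSpace ℝ H]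
    (φ : H → EReal) (x : H) : Set H :=
  {u | ∀ z : H, ((⟪z - x, u⟫ : ℝ) : EReal) ≤ φ z - φ x}

/-- Convexity for an `EReal`-valued function. -/
def EConvex {H : Type*} [NormedAddCommGroup H] [InnerProductSpace ℝ H]
    (φ : H → EReal) : Prop :=
  ∀ x₁ x₂ : H, ∀ α β : ℝ, 0 ≤ α → 0 ≤ β → α + β = 1 →
    φ (α • x₁ + β • x₂) ≤ (α : EReal) * φ x₁ + (β : EReal) * φ x₂

/-- `b : H × H → ℝ ∪ {+∞}` is a bipotential: separately convex and lower semicontinuous,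
above the duality pairing, and the three critical-point conditions are pairwise
equivalent. -/
def IsBipotential {H : Type*} [NormedAddCommGroup H] [InnerProductSpace ℝ H]
    (b : H → H → EReal) : Prop :=
  (∀ y : H, EConvex (fun x => b x y) ∧ LowerSemicontinuous (fun x => b x y)) ∧
  (∀ x : H, EConvex (fun y => b x y) ∧ LowerSemicontinuous (fun y => b x y)) ∧
  (∀ x y : H, ((⟪x, y⟫ : ℝ) : EReal) ≤ b x y) ∧
  (∀ x y : H,
    (y ∈ ESubdiff (fun x' => b x' y) x ↔ b x y = ((⟪x, y⟫ : ℝ) : EReal)) ∧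
    (x ∈ ESubdiff (fun y' => b x y') y ↔ b x y = ((⟪x, y⟫ : ℝ) : EReal)))

/-- The graph `M(b)` of a bipotential `b`. -/
def BipGraph {H : Type*} [NormedAddCommGroup H] [InnerProductSpace ℝ H]
    (b : H → H → EReal) : Set (H × H) :=
  {p | b p.1 p.2 = ((⟪p.1, p.2⟫ : ℝ) : EReal)}

section Aux
variable {H : Type*} [NormedAddCommGroup H] [InnerProductSpace ℝ H]

/-- An extended-real valued function that equals a linear functional on a convex set
and `⊤` outside is convex. -/
lemma aux_econvex {S : Set H} (hS : Convex ℝ S) (l : H → ℝ)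
    (hl : ∀ (a b : H) (α β : ℝ), l (α • a + β • b) = α * l a + β * l b)
    (f : H → EReal) (hf1 : ∀ x ∈ S, f x = ((l x : ℝ) : EReal))
    (hf2 : ∀ x ∉ S, f x = ⊤) : EConvex f := by
  have key : ∀ x₁ x₂ : H, ∀ α β : ℝ, 0 < α → 0 ≤ β → x₁ ∉ S →
      f (α • x₁ + β • x₂) ≤ (α : EReal) * f x₁ + (β : EReal) * f x₂ := by
    intro x₁ x₂ α β hα hβ h1
    have ht : (α : EReal) * f x₁ = ⊤ := by
      rw [hf2 x₁ h1]; exact EReal.coe_mul_top_of_pos hα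
    have hb : (β : EReal) * f x₂ ≠ ⊥ := by
      rcases hβ.eq_or_lt with h | h
      · rw [← h]; simp
      · by_cases h2 : x₂ ∈ S
        · rw [hf1 x₂ h2, ← EReal.coe_mul]; exact EReal.coe_ne_bot _
        · rw [hf2 x₂ h2, EReal.coe_mul_top_of_pos h]; exact top_ne_bot
    rw [ht, EReal.top_add_of_ne_bot hb]
    exact le_top
  intro x₁ x₂ α β hα hβ hαβ
  by_cases h1 : x₁ ∈ S
  · by_cases h2 : x₂ ∈ S
    · have hm : α • x₁ + β • x₂ ∈ S := hS h1 h2 hα hβ hαβ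
      rw [hf1 _ hm, hf1 _ h1, hf1 _ h2, hl]
      norm_cast
    · rcases hβ.eq_or_lt with h | h
      · have hα1 : α = 1 := by linarith
        subst hα1
        rw [← h]
        simp [hf1 _ h1]
      · have := key x₂ x₁ β α h hα h2
        rw [add_comm ((β:EReal) * f x₂), add_comm (β • x₂)] at this
        exact this
  · rcases hα.eq_or_lt with h | h
    · have hβ1 : β = 1 := by linarith
      subst hβ1
      rw [← h]
      simp
    · exact key x₁ x₂ α β h hβ h1

/-- Lower semicontinuity of the same kind of function, on a closed set. -/
lemma aux_lsc {S : Set H} (hS : IsClosed S) {g : H → ℝ} (hg : Continuous g)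
    (f : H → EReal) (hf1 : ∀ x ∈ S, f x = ((g x : ℝ) : EReal))
    (hf2 : ∀ x ∉ S, f x = ⊤) : LowerSemicontinuous f := by
  intro x c hc
  by_cases hx : x ∈ S
  · rw [hf1 x hx] at hc
    have hcont : ContinuousAt (fun z => ((g z : ℝ) : EReal)) x :=
      (continuous_coe_real_ereal.comp hg).continuousAt
    have hev : ∀ᶠ z in 𝓝 x, ((g z : ℝ) : EReal) ∈ Set.Ioi c :=
      hcont.eventually_mem (isOpen_Ioi.mem_nhds hc)
    filter_upwards [hev] with z hz
    by_cases hzS : z ∈ S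
    · rw [hf1 z hzS]; exact hz
    · rw [hf2 z hzS]; exact lt_of_lt_of_le hc le_top
  · rw [hf2 x hx] at hc
    filter_upwards [hS.isOpen_compl.mem_nhds hx] with z hz
    by_cases hzS : z ∈ S
    · exact absurd hzS hz
    · rw [hf2 z hzS]; exact hc

/-- The sublevel set of a lsc function under a continuous function is closed. -/
lemma aux_closed {f : H → EReal} (hf : LowerSemicontinuous f) {g : H → ℝ}
    (hg : Continuous g) : IsClosed {x | f x ≤ ((g x : ℝ) : EReal)} := by
  rw [← isOpen_compl_iff, isOpen_iff_mem_nhds]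
  intro x hx
  rw [Set.mem_compl_iff, Set.mem_setOf_eq, not_le] at hx
  obtain ⟨c, hc1, hc2⟩ := exists_between hx
  have h1 := hf x c hc2
  have hcont : ContinuousAt (fun z => ((g z : ℝ) : EReal)) x :=
    (continuous_coe_real_ereal.comp hg).continuousAt
  have h2 : ∀ᶠ z in 𝓝 x, ((g z : ℝ) : EReal) ∈ Set.Iio c :=
    hcont.eventually_mem (isOpen_Iio.mem_nhds hc1)
  filter_upwards [h1, h2] with z hz1 hz2
  rw [Set.mem_compl_iff, Set.mem_setOf_eq, not_le]
  exact hz2.trans hz1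

end Aux

/-- a non-empty set `M ⊆ H × H` is the graph of a bipotential if and only if
all its sections `M(x)` and `M*(y)` are convex and closed. -/
theorem exists_bipotential_iff_sections_convex_closed
    {H : Type*} [NormedAddCommGroup H] [InnerProductSpace ℝ H] [CompleteSpace H]
    (M : Set (H × H)) (hM : M.Nonempty) :
    (∃ b : H → H → EReal, IsBipotential b ∧ BipGraph b = M) ↔
      ((∀ x : H, Convex ℝ {y : H | (x, y) ∈ M} ∧ IsClosed {y : H | (x, y) ∈ M}) ∧
       (∀ y : H, Convex ℝ {x : H | (x, y) ∈ M} ∧ IsClosed {x : H | (x, y) ∈ M})) := by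
  constructor
  · -- forward direction
    rintro ⟨b, ⟨h1, h2, h3, -⟩, rfl⟩
    constructor
    · intro x
      have hsec : {y : H | (x, y) ∈ BipGraph b} = {y : H | b x y ≤ ((⟪x, y⟫ : ℝ) : EReal)} := by
        ext y
        simp only [BipGraph, Set.mem_setOf_eq]
        exact ⟨le_of_eq, fun h => le_antisymm h (h3 x y)⟩
      constructor
      · intro y₁ hy₁ y₂ hy₂ α β hα hβ hαβ
        simp only [BipGraph, Set.mem_setOf_eq] at hy₁ hy₂ ⊢
        refine le_antisymm ?_ (h3 _ _)
        calc b x (α • y₁ + β • y₂) ≤ (α : EReal) * b x y₁ + (β : EReal) * b x y₂ :=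
              (h2 x).1 y₁ y₂ α β hα hβ hαβ
          _ = ((⟪x, α • y₁ + β • y₂⟫ : ℝ) : EReal) := by
              rw [hy₁, hy₂, inner_add_right, real_inner_smul_right, real_inner_smul_right]
              norm_cast
      · rw [hsec]
        exact aux_closed (h2 x).2 (continuous_const.inner continuous_id)
    · intro y
      have hsec : {x : H | (x, y) ∈ BipGraph b} = {x : H | b x y ≤ ((⟪x, y⟫ : ℝ) : EReal)} := by
        ext x
        simp only [BipGraph, Set.mem_setOf_eq]
        exact ⟨le_of_eq, fun h => le_antisymm h (h3 x y)⟩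
      constructor
      · intro x₁ hx₁ x₂ hx₂ α β hα hβ hαβ
        simp only [BipGraph, Set.mem_setOf_eq] at hx₁ hx₂ ⊢
        refine le_antisymm ?_ (h3 _ _)
        calc b (α • x₁ + β • x₂) y ≤ (α : EReal) * b x₁ y + (β : EReal) * b x₂ y :=
              (h1 y).1 x₁ x₂ α β hα hβ hαβ
          _ = ((⟪α • x₁ + β • x₂, y⟫ : ℝ) : EReal) := by
              rw [hx₁, hx₂, inner_add_left, real_inner_smul_left, real_inner_smul_left]
              norm_cast
      · rw [hsec]
        exact aux_closed (h1 y).2 (continuous_id.inner continuous_const)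
  · -- backward direction
    rintro ⟨hx, hy⟩
    classical
    refine ⟨fun x y => if (x, y) ∈ M then ((⟪x, y⟫ : ℝ) : EReal) else ⊤, ?_, ?_⟩
    · have hmemval : ∀ x y : H, (x, y) ∈ M →
          (if (x, y) ∈ M then ((⟪x, y⟫ : ℝ) : EReal) else ⊤) = ((⟪x, y⟫ : ℝ) : EReal) :=
        fun x y h => if_pos h
      have hnotval : ∀ x y : H, (x, y) ∉ M →
          (if (x, y) ∈ M then ((⟪x, y⟫ : ℝ) : EReal) else ⊤) = ⊤ :=
        fun x y h => if_neg h
      refine ⟨?_, ?_, ?_, ?_⟩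
      · intro y
        constructor
        · exact aux_econvex (hy y).1 (fun x => ⟪x, y⟫)
            (fun a b α β => by simp only [inner_add_left, real_inner_smul_left])
            _ (fun x h => hmemval x y h) (fun x h => hnotval x y h)
        · exact aux_lsc (hy y).2 (continuous_id.inner continuous_const)
            _ (fun x h => hmemval x y h) (fun x h => hnotval x y h)
      · intro x
        constructor
        · exact aux_econvex (hx x).1 (fun y => ⟪x, y⟫)
            (fun a b α β => by simp only [inner_add_right, real_inner_smul_right])
            _ (fun y h => hmemval x y h) (fun y h => hnotval x y h)
        · exact aux_lsc (hx x).2 (continuous_const.inner continuous_id)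
            _ (fun y h => hmemval x y h) (fun y h => hnotval x y h)
      · intro x y
        by_cases h : (x, y) ∈ M
        · simp only [h, if_true]; exact le_refl _
        · simp only [h, if_false]; exact le_top
      · intro x y
        have subdiff_of_mem_fst : (x, y) ∈ M →
            y ∈ ESubdiff (fun x' => if (x', y) ∈ M then ((⟪x', y⟫ : ℝ) : EReal) else ⊤) x := by
          intro h z
          simp only [h, if_true]
          by_cases hz : (z, y) ∈ M
          · rw [if_pos hz, ← EReal.coe_sub, inner_sub_left]
          · rw [if_neg hz, EReal.top_sub_coe]
            exact le_top
        have subdiff_of_mem_snd : (x, y) ∈ M →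
            x ∈ ESubdiff (fun y' => if (x, y') ∈ M then ((⟪x, y'⟫ : ℝ) : EReal) else ⊤) y := by
          intro h z
          simp only [h, if_true]
          by_cases hz : (x, z) ∈ M
          · rw [if_pos hz, ← EReal.coe_sub]
            rw [inner_sub_left, real_inner_comm z x, real_inner_comm y x]
          · rw [if_neg hz, EReal.top_sub_coe]
            exact le_top
        have top_sub_top : (⊤ : EReal) - ⊤ = ⊥ := by simp [sub_eq_add_neg]
        constructor
        · constructor
          · intro hsub
            by_cases h : (x, y) ∈ M
            · simp only [h, if_true]
            · exfalso
              have := hsub x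
              simp only [h, if_false, top_sub_top] at this
              exact (EReal.coe_ne_bot _) (le_bot_iff.mp this)
          · intro heq
            have h : (x, y) ∈ M := by
              by_contra h
              simp only [h, if_false] at heq
              exact (EReal.coe_ne_top _) heq.symm
            exact subdiff_of_mem_fst h
        · constructor
          · intro hsub
            by_cases h : (x, y) ∈ M
            · simp only [h, if_true]
            · exfalso
              have := hsub y
              simp only [h, if_false, top_sub_top] at this
              exact (EReal.coe_ne_bot _) (le_bot_iff.mp this)
          · intro heq
            have h : (x, y) ∈ M := by
              by_contra h
              simp only [h, if_false] at heq
              exact (EReal.coe_ne_top _) heq.symm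
            exact subdiff_of_mem_snd h
    · ext ⟨x, y⟩
      simp only [BipGraph, Set.mem_setOf_eq]
      by_cases h : (x, y) ∈ M
      · simp [h]
      · simp only [if_neg h, h, iff_false]
        exact fun heq => (EReal.coe_ne_top _) heq.symm
end

section
/- Let M ⊆ H × H be a non-empty set such that for every x ∈ H the section M(x) = {y : (x,y) ∈ M} is convex and closed and for every y ∈ H the section M*(y) = {x : (x,y) ∈ M} is convex and closed. Define b_∞(x,y) = ⟨x,y⟩ if (x,y) ∈ M and b_∞(x,y) = +∞ otherwise. Then b_∞ is a bipotential on H and its graph M(b_∞) equals M. -/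
open scoped RealInnerProductSpace

open Classical in
lemma aux_lsc_s1 {H : Type*} [NormedAddCommGroup H] [InnerProductSpace ℝ H]
    (S : Set H) (hS : IsClosed S) (g : H → ℝ) (hg : Continuous g) :
    LowerSemicontinuous (fun z => if z ∈ S then ((g z : ℝ) : EReal) else ⊤) := by
  intro x c hc
  replace hc : c < if x ∈ S then ((g x : ℝ) : EReal) else ⊤ := hc
  have hshow : (∀ᶠ z in nhds x, c < if z ∈ S then ((g z : ℝ) : EReal) else ⊤) →
      ∀ᶠ x' in nhds x, c < (fun z => if z ∈ S then ((g z : ℝ) : EReal) else ⊤) x' := fun h => h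
  apply hshow
  by_cases hx : x ∈ S
  · rw [if_pos hx] at hc
    induction c using EReal.rec with
    | bot =>
      filter_upwards with z
      by_cases hz : z ∈ S
      · rw [if_pos hz]; exact EReal.bot_lt_coe _
      · rw [if_neg hz]; exact bot_lt_top
    | coe r =>
      have hr : r < g x := by exact_mod_cast hc
      have hev : ∀ᶠ z in nhds x, r < g z := (hg.continuousAt).eventually_const_lt hr
      filter_upwards [hev] with z hz
      by_cases hzS : z ∈ S
      · rw [if_pos hzS]; exact_mod_cast hz
      · rw [if_neg hzS]; exact EReal.coe_lt_top r
    | top => exact absurd hc (not_lt.mpr le_top)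
  · have hev : ∀ᶠ z in nhds x, z ∈ Sᶜ := hS.isOpen_compl.mem_nhds hx
    rw [if_neg hx] at hc
    filter_upwards [hev] with z hz
    rw [if_neg hz]
    exact hc

open Classical in
lemma aux_conv {H : Type*} [NormedAddCommGroup H] [InnerProductSpace ℝ H]
    (S : Set H) (hS : Convex ℝ S) (g : H → ℝ)
    (hlin : ∀ (α β : ℝ) (x₁ x₂ : H), g (α • x₁ + β • x₂) = α * g x₁ + β * g x₂) :
    EConvex (fun z => if z ∈ S then ((g z : ℝ) : EReal) else ⊤) := by
  intro x₁ x₂ α β hα hβ hab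
  rcases hα.eq_or_lt with h0 | hαpos
  · have hβ1 : β = 1 := by linarith
    subst hβ1; rw [← h0]
    simp
  rcases hβ.eq_or_lt with h0 | hβpos
  · have hα1 : α = 1 := by linarith
    subst hα1; rw [← h0]
    simp
  have hαE : (0 : EReal) < (α : EReal) := by exact_mod_cast hαpos
  have hβE : (0 : EReal) < (β : EReal) := by exact_mod_cast hβpos
  by_cases h1 : x₁ ∈ S
  · by_cases h2 : x₂ ∈ S
    · have hmem : α • x₁ + β • x₂ ∈ S := hS h1 h2 hα hβ hab
      simp only [if_pos h1, if_pos h2, if_pos hmem]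
      rw [hlin]
      push_cast
      exact le_refl _
    · simp only [if_pos h1, if_neg h2]
      rw [EReal.mul_top_of_pos hβE, EReal.add_top_of_ne_bot (by rw [← EReal.coe_mul]; exact EReal.coe_ne_bot _)]
      exact le_top
  · simp only [if_neg h1]
    rw [EReal.mul_top_of_pos hαE, EReal.top_add_of_ne_bot]
    · exact le_top
    · by_cases h2 : x₂ ∈ S
      · rw [if_pos h2, ← EReal.coe_mul]; exact EReal.coe_ne_bot _
      · rw [if_neg h2, EReal.mul_top_of_pos hβE]; simp

open Classical in
lemma aux_subdiff {H : Type*} [NormedAddCommGroup H] [InnerProductSpace ℝ H]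
    (S : Set H) (g : H → ℝ) (u x : H) (hg : ∀ z, g z - g x = ⟪z - x, u⟫) :
    u ∈ ESubdiff (fun z => if z ∈ S then ((g z : ℝ) : EReal) else ⊤) x ↔ x ∈ S := by
  constructor
  · intro h
    by_contra hx
    have h0 := h x
    simp only [if_neg hx, sub_self, inner_zero_left] at h0
    rw [show ((⊤ : EReal) - ⊤) = ⊥ from rfl] at h0
    exact absurd h0 (by simp)
  · intro hx z
    simp only [if_pos hx]
    by_cases hz : z ∈ S
    · simp only [if_pos hz]
      rw [← EReal.coe_sub, hg z]
    · simp only [if_neg hz, EReal.top_sub_coe]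
      exact le_top

open Classical in
theorem binfty_isBipotential
    {H : Type*} [NormedAddCommGroup H] [InnerProductSpace ℝ H] [CompleteSpace H]
    (M : Set (H × H)) (hM : M.Nonempty)
    (hsec₁ : ∀ x : H, Convex ℝ {y : H | (x, y) ∈ M} ∧ IsClosed {y : H | (x, y) ∈ M})
    (hsec₂ : ∀ y : H, Convex ℝ {x : H | (x, y) ∈ M} ∧ IsClosed {x : H | (x, y) ∈ M}) :
    IsBipotential (fun x y => if (x, y) ∈ M then ((⟪x, y⟫ : ℝ) : EReal) else ⊤) ∧
    BipGraph (fun x y => if (x, y) ∈ M then ((⟪x, y⟫ : ℝ) : EReal) else ⊤) = M := by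
  have hgraph : ∀ x y : H,
      (if (x, y) ∈ M then ((⟪x, y⟫ : ℝ) : EReal) else ⊤) = ((⟪x, y⟫ : ℝ) : EReal)
      ↔ (x, y) ∈ M := by
    intro x y
    by_cases h : (x, y) ∈ M
    · simp [h]
    · simp [h]
  constructor
  · refine ⟨?_, ?_, ?_, ?_⟩
    · intro y
      constructor
      · have := aux_conv {x : H | (x, y) ∈ M} (hsec₂ y).1 (fun x => ⟪x, y⟫)
          (fun α β x₁ x₂ => by
            simp only [inner_add_left, real_inner_smul_left])
        simpa using this
      · have := aux_lsc_s1 {x : H | (x, y) ∈ M} (hsec₂ y).2 (fun x => ⟪x, y⟫)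
          (continuous_inner.comp (continuous_id.prodMk continuous_const) :
            Continuous fun x : H => ⟪x, y⟫)
        simpa using this
    · intro x
      constructor
      · have := aux_conv {y : H | (x, y) ∈ M} (hsec₁ x).1 (fun y => ⟪x, y⟫)
          (fun α β y₁ y₂ => by
            simp only [inner_add_right, real_inner_smul_right])
        simpa using this
      · have := aux_lsc_s1 {y : H | (x, y) ∈ M} (hsec₁ x).2 (fun y => ⟪x, y⟫)
          (continuous_inner.comp (continuous_const.prodMk continuous_id) :
            Continuous fun y : H => ⟪x, y⟫)
        simpa using this
    · intro x y
      by_cases h : (x, y) ∈ M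
      · simp [h]
      · simp [h]
    · intro x y
      constructor
      · rw [hgraph]
        have := aux_subdiff {x : H | (x, y) ∈ M} (fun x' => ⟪x', y⟫) y x
          (fun z => by simp [inner_sub_left])
        simpa using this
      · rw [hgraph]
        have := aux_subdiff {y : H | (x, y) ∈ M} (fun y' => ⟪x, y'⟫) x y
          (fun z => by
            simp only [inner_sub_left]
            rw [real_inner_comm z x, real_inner_comm y x])
        simpa using this
  · ext ⟨x, y⟩
    exact hgraph x y
end

section
/- Let M ⊆ H × H be non-empty, Λ a non-empty compact topological space, and λ ↦ b_λ a bipotential convex cover of M; that is, each b_λ is a bipotential on H, and with f(λ,x,y) = b_λ(x,y): for every x ∈ H the map (λ,y) ↦ f(λ,x,y) is lower semicontinuous on Λ × H and implicitly convex in (λ,y); for every y ∈ H the map (λ,x) ↦ f(λ,x,y) is lower semicontinuous on Λ × H and implicitly convex in (λ,x); and M = ⋃_{λ ∈ Λ} M(b_λ). Then the function b(x,y) = inf { b_λ(x,y) : λ ∈ Λ } is a bipotential on H and its graph M(b) equals M. -/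
open scoped RealInnerProductSpace

/-- Implicit convexity of a parametrized family `g : Λ × V → ℝ ∪ {+∞}`. -/
def ImplicitlyConvex {Λ : Type*} {V : Type*} [AddCommMonoid V] [Module ℝ V]
    (g : Λ → V → EReal) : Prop :=
  ∀ (l₁ : Λ) (z₁ : V) (l₂ : Λ) (z₂ : V) (α β : ℝ), 0 ≤ α → 0 ≤ β → α + β = 1 →
    ∃ l : Λ, g l (α • z₁ + β • z₂) ≤ (α : EReal) * g l₁ z₁ + (β : EReal) * g l₂ z₂

/-- If `a ≤ s + ε` for every positive `ε`, then `a ≤ s`. -/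
lemma EReal_le_of_forall_add {a : EReal} {s : ℝ}
    (h : ∀ ε : ℝ, 0 < ε → a ≤ ((s + ε : ℝ) : EReal)) : a ≤ (s : EReal) := by
  refine le_of_forall_gt_imp_ge_of_dense fun c hc => ?_
  induction c with
  | bot => exact absurd hc (by simp)
  | coe t =>
      have hst : s < t := by exact_mod_cast hc
      have := h (t - s) (by linarith)
      simpa using this
  | top => exact le_top

/-- A lower semicontinuous `EReal`-valued function on a nonempty compact space
attains its infimum. -/
lemma exists_min_of_lsc {Λ : Type*} [TopologicalSpace Λ] [CompactSpace Λ] [Nonempty Λ]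
    (f : Λ → EReal) (hf : LowerSemicontinuous f) : ∃ l₀ : Λ, f l₀ = ⨅ l, f l := by
  set m := ⨅ l, f l with hm
  rcases eq_top_or_lt_top m with hmt | hmt
  · obtain ⟨l₀⟩ := ‹Nonempty Λ›
    refine ⟨l₀, le_antisymm ?_ (iInf_le f l₀)⟩
    rw [hmt]
    exact le_top
  · have hne : Nonempty {c : EReal // m < c} := ⟨⟨⊤, hmt⟩⟩
    set Z : {c : EReal // m < c} → Set Λ := fun c => f ⁻¹' Set.Iic c.1 with hZ
    have hcl : ∀ c, IsClosed (Z c) := fun c => hf.isClosed_preimage c.1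
    have hcn : ∀ c, (Z c).Nonempty := by
      intro c
      obtain ⟨l, hl⟩ := iInf_lt_iff.mp c.2
      exact ⟨l, hl.le⟩
    have hd : Directed (· ⊇ ·) Z := by
      intro c d
      refine ⟨⟨min c.1 d.1, lt_min c.2 d.2⟩, ?_, ?_⟩ <;>
        · intro l hl
          simp only [hZ, Set.mem_preimage, Set.mem_Iic] at hl ⊢
          exact hl.trans (by simp)
    obtain ⟨l₀, hl₀⟩ := IsCompact.nonempty_iInter_of_directed_nonempty_isCompact_isClosed
      Z hd hcn (fun c => (hcl c).isCompact) hcl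
    refine ⟨l₀, le_antisymm ?_ (iInf_le f l₀)⟩
    refine le_of_forall_gt_imp_ge_of_dense fun c hc => ?_
    exact Set.mem_iInter.mp hl₀ ⟨c, hc⟩

/-- The pointwise infimum over a compact space of a jointly lower semicontinuous
family is lower semicontinuous. -/
lemma lsc_iInf {Λ H : Type*} [TopologicalSpace Λ] [CompactSpace Λ] [TopologicalSpace H]
    (f : Λ → H → EReal) (hf : LowerSemicontinuous fun p : Λ × H => f p.1 p.2) :
    LowerSemicontinuous fun x => ⨅ l, f l x := by
  intro x₀ c hc
  obtain ⟨c', hcc', hc'⟩ := exists_between hc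
  have key : ∀ l : Λ, ∃ U ∈ nhds l, ∃ V ∈ nhds x₀, ∀ l' ∈ U, ∀ x ∈ V, c' < f l' x := by
    intro l
    have h1 : c' < f l x₀ := hc'.trans_le (iInf_le _ l)
    have h2 := hf (l, x₀) c' h1
    rw [nhds_prod_eq, Filter.eventually_prod_iff] at h2
    obtain ⟨pa, hpa, pb, hpb, hab⟩ := h2
    exact ⟨{l' | pa l'}, hpa, {x | pb x}, hpb, fun l' hl' x hx => hab hl' hx⟩
  choose U hU V hV hUV using key
  obtain ⟨t, ht⟩ := isCompact_univ.elim_nhds_subcover U (fun l _ => hU l)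
  have hVt : (⋂ l ∈ t, V l) ∈ nhds x₀ := (Filter.biInter_finset_mem t).mpr fun l _ => hV l
  filter_upwards [hVt] with x hx
  refine hcc'.trans_le (le_iInf fun l => ?_)
  obtain ⟨l', hl't, hl'⟩ := Set.mem_iUnion₂.mp (ht.2 (Set.mem_univ l))
  exact (hUV l' l hl' x (Set.mem_iInter₂.mp hx l' hl't)).le

/-- The pointwise infimum of an implicitly convex family bounded below by reals
is convex. -/
lemma econvex_iInf {H : Type*} [NormedAddCommGroup H] [InnerProductSpace ℝ H]
    {Λ : Type*} [Nonempty Λ] (g : Λ → H → EReal)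
    (hbot : ∀ z : H, ∃ r : ℝ, (r : EReal) ≤ ⨅ l, g l z)
    (hic : ImplicitlyConvex g) :
    EConvex (fun z => ⨅ l, g l z) := by
  intro x₁ x₂ α β hα hβ hab
  show (⨅ l, g l (α • x₁ + β • x₂)) ≤ (α : EReal) * (⨅ l, g l x₁) + (β : EReal) * (⨅ l, g l x₂)
  rcases hα.eq_or_lt with hα0 | hαpos
  · have hβ1 : β = 1 := by linarith
    simp [← hα0, hβ1]
  rcases hβ.eq_or_lt with hβ0 | hβpos
  · have hα1 : α = 1 := by linarith
    simp [← hβ0, hα1]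
  obtain ⟨c₁, hc₁⟩ := hbot x₁
  obtain ⟨c₂, hc₂⟩ := hbot x₂
  have hne₁ : (⨅ l, g l x₁) ≠ ⊥ := ((EReal.bot_lt_coe c₁).trans_le hc₁).ne'
  have hne₂ : (⨅ l, g l x₂) ≠ ⊥ := ((EReal.bot_lt_coe c₂).trans_le hc₂).ne'
  have hmulnb : ∀ (γ : ℝ) (I : EReal), 0 < γ → I ≠ ⊥ → (γ : EReal) * I ≠ ⊥ := by
    intro γ I hγ hI
    induction I with
    | bot => exact absurd rfl hI
    | coe r => rw [← EReal.coe_mul]; exact EReal.coe_ne_bot _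
    | top => rw [EReal.coe_mul_top_of_pos hγ]; exact top_ne_bot
  by_cases h1t : (⨅ l, g l x₁) = ⊤
  · rw [h1t, EReal.coe_mul_top_of_pos hαpos,
      EReal.top_add_of_ne_bot (hmulnb β _ hβpos hne₂)]
    exact le_top
  by_cases h2t : (⨅ l, g l x₂) = ⊤
  · rw [h2t, EReal.coe_mul_top_of_pos hβpos,
      EReal.add_top_of_ne_bot (hmulnb α _ hαpos hne₁)]
    exact le_top
  set r₁ : ℝ := (⨅ l, g l x₁).toReal with hr₁
  set r₂ : ℝ := (⨅ l, g l x₂).toReal with hr₂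
  have hI₁ : (⨅ l, g l x₁) = (r₁ : EReal) := (EReal.coe_toReal h1t hne₁).symm
  have hI₂ : (⨅ l, g l x₂) = (r₂ : EReal) := (EReal.coe_toReal h2t hne₂).symm
  rw [hI₁, hI₂, ← EReal.coe_mul, ← EReal.coe_mul, ← EReal.coe_add]
  apply EReal_le_of_forall_add
  intro ε hε
  have e1 : (⨅ l, g l x₁) < ((r₁ + ε : ℝ) : EReal) := by
    rw [hI₁]; exact_mod_cast (lt_add_iff_pos_right _).2 hε
  have e2 : (⨅ l, g l x₂) < ((r₂ + ε : ℝ) : EReal) := by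
    rw [hI₂]; exact_mod_cast (lt_add_iff_pos_right _).2 hε
  obtain ⟨l₁, hl₁⟩ := iInf_lt_iff.mp e1
  obtain ⟨l₂, hl₂⟩ := iInf_lt_iff.mp e2
  obtain ⟨l, hl⟩ := hic l₁ x₁ l₂ x₂ α β hα hβ hab
  refine le_trans (iInf_le _ l) (hl.trans ?_)
  calc (α : EReal) * g l₁ x₁ + (β : EReal) * g l₂ x₂
      ≤ (α : EReal) * ((r₁ + ε : ℝ) : EReal) + (β : EReal) * ((r₂ + ε : ℝ) : EReal) :=
        add_le_add (mul_le_mul_of_nonneg_left hl₁.le (by exact_mod_cast hα))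
          (mul_le_mul_of_nonneg_left hl₂.le (by exact_mod_cast hβ))
    _ = ((α * r₁ + β * r₂ + ε : ℝ) : EReal) := by
        rw [← EReal.coe_mul, ← EReal.coe_mul, ← EReal.coe_add]
        norm_cast
        linear_combination ε * hab

/-- if `λ ↦ b_λ` is a bipotential convex cover of the non-empty set `M`
(indexed by a non-empty compact topological space `Λ`, with the joint lower
semicontinuity and implicit convexity conditions, and `M = ⋃_λ M(b_λ)`), then
`b(x,y) = inf_λ b_λ(x,y)` is a bipotential with graph `M`. -/
theorem inf_of_bipotential_convex_cover_isBipotential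
    {H : Type*} [NormedAddCommGroup H] [InnerProductSpace ℝ H] [CompleteSpace H]
    {Λ : Type*} [TopologicalSpace Λ] [CompactSpace Λ] [Nonempty Λ]
    (M : Set (H × H)) (hM : M.Nonempty)
    (b : Λ → H → H → EReal)
    (hbip : ∀ l : Λ, IsBipotential (b l))
    (hlsc₁ : ∀ x : H, LowerSemicontinuous (fun p : Λ × H => b p.1 x p.2))
    (hlsc₂ : ∀ y : H, LowerSemicontinuous (fun p : Λ × H => b p.1 p.2 y))
    (hic₁ : ∀ x : H, ImplicitlyConvex (fun l (y : H) => b l x y))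
    (hic₂ : ∀ y : H, ImplicitlyConvex (fun l (x : H) => b l x y))
    (hcover : M = ⋃ l : Λ, BipGraph (b l)) :
    IsBipotential (fun x y => ⨅ l : Λ, b l x y) ∧
    BipGraph (fun x y => ⨅ l : Λ, b l x y) = M := by
  have hpair : ∀ x y : H, ((⟪x, y⟫ : ℝ) : EReal) ≤ ⨅ l, b l x y :=
    fun x y => le_iInf fun l => (hbip l).2.2.1 x y
  have hBle : ∀ (l : Λ) (x y : H), (⨅ l, b l x y) ≤ b l x y := fun l x y => iInf_le _ l
  have hattain : ∀ x y : H, ∃ l₀, b l₀ x y = ⨅ l, b l x y := by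
    intro x y
    apply exists_min_of_lsc (fun l => b l x y)
    intro l c hc
    have h := hlsc₁ x (l, y) c hc
    exact ((continuous_id.prodMk continuous_const).tendsto l).eventually h
  -- the three equivalent conditions
  have hmain : ∀ x y : H,
      (y ∈ ESubdiff (fun x' => ⨅ l, b l x' y) x ↔ (⨅ l, b l x y) = ((⟪x, y⟫ : ℝ) : EReal)) ∧
      (x ∈ ESubdiff (fun y' => ⨅ l, b l x y') y ↔ (⨅ l, b l x y) = ((⟪x, y⟫ : ℝ) : EReal)) := by
    intro x y
    constructor
    · constructor
      · intro hmem
        obtain ⟨l₀, hl₀⟩ := hattain x y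
        have hsub0 : y ∈ ESubdiff (fun x' => b l₀ x' y) x := by
          intro z
          refine (hmem z).trans ?_
          show (⨅ l, b l z y) - (⨅ l, b l x y) ≤ b l₀ z y - b l₀ x y
          rw [← hl₀]
          exact EReal.sub_le_sub (hBle l₀ z y) le_rfl
        have h := ((hbip l₀).2.2.2 x y).1.mp hsub0
        rw [hl₀] at h
        exact h
      · intro hxy z
        show ((⟪z - x, y⟫ : ℝ) : EReal) ≤ (⨅ l, b l z y) - (⨅ l, b l x y)
        rw [hxy, inner_sub_left, EReal.coe_sub]
        exact EReal.sub_le_sub (hpair z y) le_rfl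
    · constructor
      · intro hmem
        obtain ⟨l₀, hl₀⟩ := hattain x y
        have hsub0 : x ∈ ESubdiff (fun y' => b l₀ x y') y := by
          intro z
          refine (hmem z).trans ?_
          show (⨅ l, b l x z) - (⨅ l, b l x y) ≤ b l₀ x z - b l₀ x y
          rw [← hl₀]
          exact EReal.sub_le_sub (hBle l₀ x z) le_rfl
        have h := ((hbip l₀).2.2.2 x y).2.mp hsub0
        rw [hl₀] at h
        exact h
      · intro hxy z
        show ((⟪z - y, x⟫ : ℝ) : EReal) ≤ (⨅ l, b l x z) - (⨅ l, b l x y)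
        rw [hxy, inner_sub_left, EReal.coe_sub]
        have : ((⟪z, x⟫ : ℝ) : EReal) ≤ ⨅ l, b l x z := by
          rw [real_inner_comm]; exact hpair x z
        have h2 : ((⟪x, y⟫ : ℝ) : EReal) = ((⟪y, x⟫ : ℝ) : EReal) := by
          rw [real_inner_comm]
        rw [h2]
        exact EReal.sub_le_sub this le_rfl
  refine ⟨⟨?_, ?_, hpair, hmain⟩, ?_⟩
  · intro y
    refine ⟨econvex_iInf _ (fun z => ⟨⟪z, y⟫, le_iInf fun l => (hbip l).2.2.1 z y⟩) (hic₂ y),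
      lsc_iInf (fun l x => b l x y) (hlsc₂ y)⟩
  · intro x
    refine ⟨econvex_iInf _ (fun z => ⟨⟪x, z⟫, le_iInf fun l => (hbip l).2.2.1 x z⟩) (hic₁ x),
      lsc_iInf (fun l y => b l x y) (hlsc₁ x)⟩
  · ext ⟨x, y⟩
    simp only [BipGraph, Set.mem_setOf_eq, hcover, Set.mem_iUnion]
    constructor
    · intro h
      obtain ⟨l₀, hl₀⟩ := hattain x y
      exact ⟨l₀, by rw [hl₀, h]⟩
    · rintro ⟨l, hl⟩
      exact le_antisymm (le_trans (hBle l x y) hl.le) (hpair x y)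
end

section
/- Let λ > 0 and ε > 0, and define b : ℝⁿ × ℝⁿ → ℝ by b(x,y) = ⟨x,y⟩ + (1/(2λ)) · (max(‖y − λx‖ − ε, 0))². Then b is a bipotential on ℝⁿ and its graph M(b) equals the blurred elastic law M = {(x,y) ∈ ℝⁿ × ℝⁿ : ‖y − λx‖ ≤ ε}. In particular, for all (x,y), the relation ‖y − λx‖ ≤ ε holds if and only if y ∈ ∂(b(·,y))(x). -/
open scoped RealInnerProductSpace

/-- The bipotential of the blurred (thick-line) elasticity law:
`b(x,y) = ⟨x,y⟩ + (1/(2λ)) (max(‖y − λx‖ − ε, 0))²`. -/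
noncomputable def blurredElasticBipotential (n : ℕ) (lam eps : ℝ) :
    EuclideanSpace ℝ (Fin n) → EuclideanSpace ℝ (Fin n) → EReal :=
  fun x y => ((⟪x, y⟫ + (1 / (2 * lam)) * (max (‖y - lam • x‖ - eps) 0) ^ 2 : ℝ) : EReal)

/-! ### Auxiliary lemmas -/

section Aux

/-- The squared-hinge function `t ↦ (max (t - eps) 0)^2`. -/
noncomputable def hqf (eps t : ℝ) : ℝ := (max (t - eps) 0) ^ 2

lemma hqf_nonneg (eps t : ℝ) : 0 ≤ hqf eps t := sq_nonneg _

lemma hqf_mono (eps : ℝ) : Monotone (hqf eps) := fun s t hst => by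
  have h1 : (0:ℝ) ≤ max (s - eps) 0 := le_max_right _ _
  exact pow_le_pow_left₀ h1 (max_le_max (by linarith) le_rfl) 2

lemma hqf_eq_zero_iff (eps t : ℝ) : hqf eps t = 0 ↔ t ≤ eps := by
  unfold hqf
  rw [pow_eq_zero_iff (by norm_num : 2 ≠ 0), max_eq_right_iff]
  constructor <;> intro h <;> linarith

lemma hqf_threepoint (eps s t α β : ℝ) (hα : 0 ≤ α) (hβ : 0 ≤ β) (hs : α + β = 1) :
    hqf eps (α * s + β * t) ≤ α * hqf eps s + β * hqf eps t := by
  unfold hqf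
  set a := max (s - eps) 0 with ha
  set b := max (t - eps) 0 with hb
  have ha0 : 0 ≤ a := le_max_right _ _
  have hb0 : 0 ≤ b := le_max_right _ _
  have has : s - eps ≤ a := le_max_left _ _
  have hbs : t - eps ≤ b := le_max_left _ _
  have h1 : max (α * s + β * t - eps) 0 ≤ α * a + β * b := by
    apply max_le
    · have e1 : α * (s - eps) ≤ α * a := mul_le_mul_of_nonneg_left has hα
      have e2 : β * (t - eps) ≤ β * b := mul_le_mul_of_nonneg_left hbs hβ
      have e3 : α * eps + β * eps = eps := by rw [← add_mul, hs, one_mul]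
      nlinarith [e1, e2, e3]
    · positivity
  have h2 : (max (α * s + β * t - eps) 0) ^ 2 ≤ (α * a + β * b) ^ 2 :=
    pow_le_pow_left₀ (le_max_right _ _) h1 2
  nlinarith [mul_nonneg (mul_nonneg hα hβ) (sq_nonneg (a - b))]

variable {H : Type*} [NormedAddCommGroup H] [InnerProductSpace ℝ H]

lemma norm_affine_comb (v : H) (d : ℝ) (x₁ x₂ : H) (α β : ℝ) (hα : 0 ≤ α) (hβ : 0 ≤ β)
    (hs : α + β = 1) :
    ‖v + d • (α • x₁ + β • x₂)‖ ≤ α * ‖v + d • x₁‖ + β * ‖v + d • x₂‖ := by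
  have hv : v + d • (α • x₁ + β • x₂) = α • (v + d • x₁) + β • (v + d • x₂) := by
    calc v + d • (α • x₁ + β • x₂) = (α + β) • v + d • (α • x₁ + β • x₂) := by
          rw [hs, one_smul]
      _ = α • (v + d • x₁) + β • (v + d • x₂) := by module
  rw [hv]
  calc ‖α • (v + d • x₁) + β • (v + d • x₂)‖ ≤ ‖α • (v + d • x₁)‖ + ‖β • (v + d • x₂)‖ :=
        norm_add_le _ _
    _ = α * ‖v + d • x₁‖ + β * ‖v + d • x₂‖ := by
        rw [norm_smul, norm_smul, Real.norm_eq_abs, Real.norm_eq_abs,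
          abs_of_nonneg hα, abs_of_nonneg hβ]

/-- Convexity of a slice of the blurred elastic bipotential. -/
lemma slice_econvex (eps c : ℝ) (hc : 0 ≤ c) (u v : H) (d : ℝ) :
    EConvex (fun x : H => ((⟪x, u⟫ + c * hqf eps ‖v + d • x‖ : ℝ) : EReal)) := by
  intro x₁ x₂ α β hα hβ hs
  have hnorm := norm_affine_comb v d x₁ x₂ α β hα hβ hs
  have hq1 : hqf eps ‖v + d • (α • x₁ + β • x₂)‖
      ≤ α * hqf eps ‖v + d • x₁‖ + β * hqf eps ‖v + d • x₂‖ :=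
    le_trans (hqf_mono eps hnorm) (hqf_threepoint eps _ _ α β hα hβ hs)
  have hinner : (⟪α • x₁ + β • x₂, u⟫ : ℝ) = α * ⟪x₁, u⟫ + β * ⟪x₂, u⟫ := by
    rw [inner_add_left, real_inner_smul_left, real_inner_smul_left]
  have hmul : c * hqf eps ‖v + d • (α • x₁ + β • x₂)‖
      ≤ c * (α * hqf eps ‖v + d • x₁‖ + β * hqf eps ‖v + d • x₂‖) :=
    mul_le_mul_of_nonneg_left hq1 hc
  have hfin : (⟪α • x₁ + β • x₂, u⟫ + c * hqf eps ‖v + d • (α • x₁ + β • x₂)‖ : ℝ)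
      ≤ α * (⟪x₁, u⟫ + c * hqf eps ‖v + d • x₁‖) + β * (⟪x₂, u⟫ + c * hqf eps ‖v + d • x₂‖) := by
    rw [hinner]; nlinarith [hmul]
  beta_reduce
  exact_mod_cast hfin

lemma slice_cont (eps c : ℝ) (u v : H) (d : ℝ) :
    Continuous (fun x : H => (⟪x, u⟫ + c * hqf eps ‖v + d • x‖ : ℝ)) := by
  unfold hqf
  have h1 : Continuous fun x : H => (⟪x, u⟫ : ℝ) := continuous_id.inner continuous_const
  have h2 : Continuous fun x : H => ‖v + d • x‖ :=
    (continuous_const.add (continuous_id.const_smul d)).norm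
  exact h1.add (continuous_const.mul (((h2.sub continuous_const).max continuous_const).pow 2))

lemma lsc_coe (F : H → ℝ) (hF : Continuous F) :
    LowerSemicontinuous (fun x => ((F x : ℝ) : EReal)) :=
  (continuous_coe_real_ereal.comp hF).lowerSemicontinuous

lemma esubdiff_char (c : ℝ) (hc : 0 < c) (A f : H → ℝ) (u x : H)
    (hA : ∀ z, A z - A x = ⟪z - x, u⟫) (hf0 : ∀ z, 0 ≤ f z) (hex : ∃ z, f z = 0) :
    u ∈ ESubdiff (fun z => ((A z + c * f z : ℝ) : EReal)) x ↔ f x = 0 := by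
  constructor
  · intro hmem
    obtain ⟨z₀, hz₀⟩ := hex
    have h := hmem z₀
    rw [show ((A z₀ + c * f z₀ : ℝ) : EReal) - ((A x + c * f x : ℝ) : EReal)
        = ((A z₀ + c * f z₀ - (A x + c * f x) : ℝ) : EReal) by norm_cast] at h
    rw [EReal.coe_le_coe_iff] at h
    have hAz := hA z₀
    nlinarith [hf0 x]
  · intro hfx z
    have hAz := hA z
    have h1 : (⟪z - x, u⟫ : ℝ) ≤ A z + c * f z - (A x + c * f x) := by
      nlinarith [hf0 z]
    calc ((⟪z - x, u⟫ : ℝ) : EReal) ≤ ((A z + c * f z - (A x + c * f x) : ℝ) : EReal) := by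
          exact_mod_cast h1
      _ = _ := by norm_cast

end Aux

/-- for `λ > 0`, `ε > 0`, the function
`b(x,y) = ⟨x,y⟩ + (1/(2λ)) (max(‖y − λx‖ − ε, 0))²` is a bipotential on `ℝⁿ` whose graph is
the blurred elastic law `{(x,y) : ‖y − λx‖ ≤ ε}`; in particular `‖y − λx‖ ≤ ε` iff
`y ∈ ∂ b(·,y)(x)`. -/
theorem blurredElastic_isBipotential (n : ℕ) (lam eps : ℝ) (hlam : 0 < lam) (heps : 0 < eps) :
    IsBipotential (blurredElasticBipotential n lam eps) ∧
    BipGraph (blurredElasticBipotential n lam eps) =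
      {p : EuclideanSpace ℝ (Fin n) × EuclideanSpace ℝ (Fin n) | ‖p.2 - lam • p.1‖ ≤ eps} ∧
    ∀ x y : EuclideanSpace ℝ (Fin n),
      ‖y - lam • x‖ ≤ eps ↔
        y ∈ ESubdiff (fun x' => blurredElasticBipotential n lam eps x' y) x := by
  set E := EuclideanSpace ℝ (Fin n)
  have hc : (0:ℝ) < 1 / (2 * lam) := by positivity
  -- the graph characterization at a point
  have hbiff : ∀ x y : E,
      blurredElasticBipotential n lam eps x y = ((⟪x, y⟫ : ℝ) : EReal) ↔ ‖y - lam • x‖ ≤ eps := by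
    intro x y
    simp only [blurredElasticBipotential]
    rw [EReal.coe_eq_coe_iff]
    constructor
    · intro h
      have h0 : (1 / (2 * lam)) * (max (‖y - lam • x‖ - eps) 0) ^ 2 = 0 := by linarith
      have hq0 : hqf eps ‖y - lam • x‖ = 0 := by
        unfold hqf
        rcases mul_eq_zero.1 h0 with h' | h'
        · exact absurd h' hc.ne'
        · exact h'
      exact (hqf_eq_zero_iff _ _).1 hq0
    · intro h
      have hq0 : hqf eps ‖y - lam • x‖ = 0 := (hqf_eq_zero_iff _ _).2 h
      unfold hqf at hq0
      rw [hq0]; ring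
  -- the x-slice subdifferential characterization
  have hsubx : ∀ x y : E,
      y ∈ ESubdiff (fun x' => blurredElasticBipotential n lam eps x' y) x ↔
        ‖y - lam • x‖ ≤ eps := by
    intro x y
    have key := esubdiff_char (H := E) (1 / (2 * lam)) hc (fun z => (⟪z, y⟫ : ℝ))
      (fun z => hqf eps ‖y - lam • z‖) y x
      (fun z => show (⟪z, y⟫ : ℝ) - ⟪x, y⟫ = ⟪z - x, y⟫ from (inner_sub_left z x y).symm)
      (fun z => hqf_nonneg _ _)
      ⟨lam⁻¹ • y, show hqf eps ‖y - lam • (lam⁻¹ • y)‖ = 0 by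
        rw [smul_smul, mul_inv_cancel₀ hlam.ne', one_smul, sub_self, norm_zero]
        exact (hqf_eq_zero_iff _ _).2 heps.le⟩
    constructor
    · intro h
      exact (hqf_eq_zero_iff _ _).1 (key.mp h)
    · intro h
      exact key.mpr ((hqf_eq_zero_iff _ _).2 h)
  -- the y-slice subdifferential characterization
  have hsuby : ∀ x y : E,
      x ∈ ESubdiff (fun y' => blurredElasticBipotential n lam eps x y') y ↔
        ‖y - lam • x‖ ≤ eps := by
    intro x y
    have key := esubdiff_char (H := E) (1 / (2 * lam)) hc (fun z => (⟪x, z⟫ : ℝ))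
      (fun z => hqf eps ‖z - lam • x‖) x y
      (fun z => show (⟪x, z⟫ : ℝ) - ⟪x, y⟫ = ⟪z - y, x⟫ by
        rw [inner_sub_left, real_inner_comm z x, real_inner_comm y x])
      (fun z => hqf_nonneg _ _)
      ⟨lam • x, show hqf eps ‖lam • x - lam • x‖ = 0 by
        rw [sub_self, norm_zero]
        exact (hqf_eq_zero_iff _ _).2 heps.le⟩
    constructor
    · intro h
      exact (hqf_eq_zero_iff _ _).1 (key.mp h)
    · intro h
      exact key.mpr ((hqf_eq_zero_iff _ _).2 h)
  refine ⟨⟨?_, ?_, ?_, ?_⟩, ?_, ?_⟩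
  · -- x-slice: convex and lsc
    intro y
    constructor
    · have h := slice_econvex (H := E) eps (1 / (2 * lam)) hc.le y y (-lam)
      have hfun : (fun x => blurredElasticBipotential n lam eps x y)
          = fun x : E => (((⟪x, y⟫ : ℝ) + (1 / (2 * lam)) * hqf eps ‖y + (-lam) • x‖ : ℝ) : EReal) := by
        funext x
        simp only [blurredElasticBipotential, hqf, neg_smul, ← sub_eq_add_neg]
      rw [hfun]; exact h
    · have h := slice_cont (H := E) eps (1 / (2 * lam)) y y (-lam)
      have hfun : (fun x => blurredElasticBipotential n lam eps x y)
          = fun x : E => (((⟪x, y⟫ : ℝ) + (1 / (2 * lam)) * hqf eps ‖y + (-lam) • x‖ : ℝ) : EReal) := by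
        funext x
        simp only [blurredElasticBipotential, hqf, neg_smul, ← sub_eq_add_neg]
      rw [hfun]
      exact lsc_coe _ h
  · -- y-slice: convex and lsc
    intro x
    have hfun : (fun y => blurredElasticBipotential n lam eps x y)
        = fun y : E => (((⟪y, x⟫ : ℝ) + (1 / (2 * lam)) * hqf eps ‖(-(lam • x)) + (1:ℝ) • y‖ : ℝ) : EReal) := by
      funext y
      simp only [blurredElasticBipotential, hqf, one_smul]
      rw [real_inner_comm x y, show y - lam • x = -(lam • x) + y from sub_eq_neg_add y (lam • x)]
    constructor
    · rw [hfun]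
      exact slice_econvex (H := E) eps (1 / (2 * lam)) hc.le x (-(lam • x)) 1
    · rw [hfun]
      exact lsc_coe _ (slice_cont (H := E) eps (1 / (2 * lam)) x (-(lam • x)) 1)
  · -- above the duality pairing
    intro x y
    simp only [blurredElasticBipotential]
    rw [EReal.coe_le_coe_iff]
    nlinarith [hqf_nonneg eps ‖y - lam • x‖, hc, sq_nonneg (max (‖y - lam • x‖ - eps) 0)]
  · -- equivalences
    intro x y
    exact ⟨(hsubx x y).trans (hbiff x y).symm, (hsuby x y).trans (hbiff x y).symm⟩
  · -- graph equality
    ext ⟨x, y⟩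
    exact hbiff x y
  · -- final iff
    intro x y
    exact (hsubx x y).symm
end

section
/- Let λ > 0 and 0 < ε < λ, and set λ₋ = λ − ε and λ₊ = λ + ε. Define b : ℝⁿ × ℝⁿ → ℝ ∪ {+∞} by b(x,y) = max(λ₋, ‖y‖) · ‖x‖ if ‖y‖ ≤ λ₊ and b(x,y) = +∞ otherwise. Then b is a bipotential on ℝⁿ and its graph M(b) equals the blurred plastic law M = {(0,y) : ‖y‖ < λ₋} ∪ {(x,y) : λ₋ ≤ ‖y‖ ≤ λ₊ and ∃ η ≥ 0 with x = η y}. In particular, (x,y) ∈ M if and only if y ∈ ∂(b(·,y))(x). -/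
open scoped RealInnerProductSpace

/-- The bipotential of the blurred plasticity law:
`b(x,y) = max(λ₋, ‖y‖)·‖x‖` if `‖y‖ ≤ λ₊`, and `+∞` otherwise. -/
noncomputable def blurredPlasticBipotential (n : ℕ) (lm lp : ℝ) :
    EuclideanSpace ℝ (Fin n) → EuclideanSpace ℝ (Fin n) → EReal :=
  fun x y => if ‖y‖ ≤ lp then ((max lm ‖y‖ * ‖x‖ : ℝ) : EReal) else ⊤

section Aux



variable {n : ℕ} {lm lp : ℝ}
local notation "H" => EuclideanSpace ℝ (Fin n)
local notation "B" => blurredPlasticBipotential n lm lp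

lemma bp_coe {y : H} (h : ‖y‖ ≤ lp) (x : H) :
    B x y = ((max lm ‖y‖ * ‖x‖ : ℝ) : EReal) := if_pos h

lemma bp_top {y : H} (h : ¬ ‖y‖ ≤ lp) (x : H) : B x y = ⊤ := if_neg h

lemma coe_g_le_bp (x y : H) : ((max lm ‖y‖ * ‖x‖ : ℝ) : EReal) ≤ B x y := by
  unfold blurredPlasticBipotential; split
  · exact le_rfl
  · exact le_top

lemma lsc_x (y : H) : LowerSemicontinuous (fun x : H => B x y) := by
  by_cases h : ‖y‖ ≤ lp
  · have : (fun x : H => B x y) = fun x : H => ((max lm ‖y‖ * ‖x‖ : ℝ) : EReal) := by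
      funext x; exact if_pos h
    rw [this]
    exact (continuous_coe_real_ereal.comp (continuous_const.mul continuous_norm)).lowerSemicontinuous
  · have : (fun x : H => B x y) = fun _ : H => (⊤ : EReal) := by
      funext x; exact if_neg h
    rw [this]; exact lowerSemicontinuous_const

lemma lsc_y (x : H) : LowerSemicontinuous (fun y : H => B x y) := by
  intro y₀
  by_cases h : ‖y₀‖ ≤ lp
  · intro c hc
    simp only [blurredPlasticBipotential, if_pos h] at hc
    have hcont : ContinuousAt (fun y : H => ((max lm ‖y‖ * ‖x‖ : ℝ) : EReal)) y₀ :=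
      (continuous_coe_real_ereal.comp
        ((continuous_const.max continuous_norm).mul continuous_const)).continuousAt
    filter_upwards [hcont (Ioi_mem_nhds hc)] with y hy
    exact lt_of_lt_of_le hy (coe_g_le_bp x y)
  · intro c hc
    have hopen : IsOpen {y : H | lp < ‖y‖} := isOpen_lt continuous_const continuous_norm
    filter_upwards [hopen.mem_nhds (not_le.mp h)] with y hy
    have h1 : B x y = ⊤ := if_neg (not_le.mpr hy)
    have h2 : B x y₀ = ⊤ := if_neg h
    simp only [h1]
    exact lt_of_lt_of_le hc le_top

lemma conv_real_ineq (x₁ x₂ : H) {a b : ℝ} (ha : 0 ≤ a) (hb : 0 ≤ b) (hab : a + b = 1)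
    {c : ℝ} (hc : 0 ≤ c) :
    c * ‖a • x₁ + b • x₂‖ ≤ a * (c * ‖x₁‖) + b * (c * ‖x₂‖) := by
  have h1 : ‖a • x₁ + b • x₂‖ ≤ a * ‖x₁‖ + b * ‖x₂‖ := by
    calc ‖a • x₁ + b • x₂‖ ≤ ‖a • x₁‖ + ‖b • x₂‖ := norm_add_le _ _
      _ = a * ‖x₁‖ + b * ‖x₂‖ := by rw [norm_smul, norm_smul, Real.norm_eq_abs,
          Real.norm_eq_abs, abs_of_nonneg ha, abs_of_nonneg hb]
  nlinarith

lemma convex_x (y : H) :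
    ∀ x₁ x₂ : H, ∀ a b : ℝ, 0 ≤ a → 0 ≤ b → a + b = 1 →
      B (a • x₁ + b • x₂) y ≤ (a : EReal) * B x₁ y + (b : EReal) * B x₂ y := by
  intro x₁ x₂ a b ha hb hab
  by_cases h : ‖y‖ ≤ lp
  · simp only [blurredPlasticBipotential, if_pos h, ← EReal.coe_mul, ← EReal.coe_add,
      EReal.coe_le_coe_iff]
    exact conv_real_ineq x₁ x₂ ha hb hab (le_trans (norm_nonneg y) (le_max_right _ _))
  · simp only [blurredPlasticBipotential, if_neg h]
    rcases lt_or_ge 0 a with ha' | ha'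
    · rw [EReal.coe_mul_top_of_pos ha', EReal.top_add_of_ne_bot]
      rcases lt_or_ge 0 b with hb' | hb'
      · rw [EReal.coe_mul_top_of_pos hb']; exact top_ne_bot
      · have : b = 0 := le_antisymm hb' hb
        simp [this]
    · have ha0 : a = 0 := le_antisymm ha' ha
      have hb1 : b = 1 := by linarith
      simp [ha0, hb1]

lemma convex_y (hlm : 0 ≤ lm) (x : H) :
    ∀ y₁ y₂ : H, ∀ a b : ℝ, 0 ≤ a → 0 ≤ b → a + b = 1 →
      B x (a • y₁ + b • y₂) ≤ (a : EReal) * B x y₁ + (b : EReal) * B x y₂ := by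
  intro y₁ y₂ a b ha hb hab
  rcases eq_or_lt_of_le ha with ha0 | ha0
  · have hb1 : b = 1 := by linarith
    simp [← ha0, hb1]
  rcases eq_or_lt_of_le hb with hb0 | hb0
  · have ha1 : a = 1 := by linarith
    simp [← hb0, ha1]
  by_cases h1 : ‖y₁‖ ≤ lp
  · by_cases h2 : ‖y₂‖ ≤ lp
    · have hn : ‖a • y₁ + b • y₂‖ ≤ a * ‖y₁‖ + b * ‖y₂‖ := by
        calc ‖a • y₁ + b • y₂‖ ≤ ‖a • y₁‖ + ‖b • y₂‖ := norm_add_le _ _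
          _ = a * ‖y₁‖ + b * ‖y₂‖ := by rw [norm_smul, norm_smul, Real.norm_eq_abs,
              Real.norm_eq_abs, abs_of_nonneg ha, abs_of_nonneg hb]
      have hsum : a * lp + b * lp = lp := by rw [← add_mul, hab, one_mul]
      have hin : ‖a • y₁ + b • y₂‖ ≤ lp := by
        nlinarith [mul_le_mul_of_nonneg_left h1 ha, mul_le_mul_of_nonneg_left h2 hb]
      simp only [blurredPlasticBipotential, if_pos h1, if_pos h2, if_pos hin,
        ← EReal.coe_mul, ← EReal.coe_add, EReal.coe_le_coe_iff]
      have hmax : max lm ‖a • y₁ + b • y₂‖ ≤ a * max lm ‖y₁‖ + b * max lm ‖y₂‖ := by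
        apply max_le
        · nlinarith [le_max_left lm ‖y₁‖, le_max_left lm ‖y₂‖]
        · nlinarith [le_max_right lm ‖y₁‖, le_max_right lm ‖y₂‖]
      nlinarith [mul_le_mul_of_nonneg_right hmax (norm_nonneg x)]
    · simp only [blurredPlasticBipotential, if_pos h1, if_neg h2]
      rw [EReal.coe_mul_top_of_pos hb0, EReal.add_top_of_ne_bot]
      · exact le_top
      · rw [← EReal.coe_mul]; exact EReal.coe_ne_bot _
  · simp only [blurredPlasticBipotential, if_neg h1]
    rw [EReal.coe_mul_top_of_pos ha0, EReal.top_add_of_ne_bot]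
    · exact le_top
    · by_cases h2 : ‖y₂‖ ≤ lp
      · rw [if_pos h2, ← EReal.coe_mul]; exact EReal.coe_ne_bot _
      · rw [if_neg h2, EReal.coe_mul_top_of_pos hb0]; exact top_ne_bot


lemma cs_max (x y : H) : ⟪x, y⟫ ≤ max lm ‖y‖ * ‖x‖ := by
  calc ⟪x,y⟫ ≤ ‖x‖ * ‖y‖ := real_inner_le_norm x y
    _ ≤ max lm ‖y‖ * ‖x‖ := by nlinarith [le_max_right lm ‖y‖, norm_nonneg x]

lemma subdiff1 {y : H} (h : ‖y‖ ≤ lp) (x : H) :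
    y ∈ ESubdiff (fun x' => B x' y) x ↔ max lm ‖y‖ * ‖x‖ = ⟪x, y⟫ := by
  constructor
  · intro hs
    have h0 := hs 0
    simp only [blurredPlasticBipotential, if_pos h, ← EReal.coe_sub,
      EReal.coe_le_coe_iff] at h0
    rw [zero_sub, inner_neg_left] at h0
    simp only [norm_zero, mul_zero] at h0
    exact le_antisymm (by linarith) (cs_max x y)
  · intro heq z
    simp only [blurredPlasticBipotential, if_pos h, ← EReal.coe_sub, EReal.coe_le_coe_iff]
    rw [inner_sub_left]
    have := cs_max (lm:=lm) z y
    linarith [heq ▸ le_refl (max lm ‖y‖ * ‖x‖)]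

lemma not_subdiff1 {y : H} (h : ¬ ‖y‖ ≤ lp) (x : H) :
    y ∉ ESubdiff (fun x' => B x' y) x := by
  intro hs
  have h0 := hs x
  simp only [blurredPlasticBipotential, if_neg h, sub_self, inner_zero_left] at h0
  simp at h0

lemma subdiff2 (hlm : 0 < lm) (hlp : lm ≤ lp) {y : H} (h : ‖y‖ ≤ lp) (x : H) :
    x ∈ ESubdiff (fun y' => B x y') y ↔ max lm ‖y‖ * ‖x‖ = ⟪x, y⟫ := by
  constructor
  · intro hs
    rcases eq_or_ne x 0 with rfl | hx
    · simp
    · have hxn : 0 < ‖x‖ := norm_pos_iff.mpr hx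
      set c := max lm ‖y‖ with hc
      have hc0 : 0 < c := lt_of_lt_of_le hlm (le_max_left _ _)
      set u : EuclideanSpace ℝ (Fin n) := (c / ‖x‖) • x with hu
      have hun : ‖u‖ = c := by
        rw [hu, norm_smul, Real.norm_eq_abs, abs_of_pos (div_pos hc0 hxn)]
        field_simp
      have humax : max lm ‖u‖ = c := by rw [hun]; exact max_eq_right (le_max_left _ _)
      have hule : ‖u‖ ≤ lp := by rw [hun]; exact max_le hlp h
      have h0 := hs u
      simp only [blurredPlasticBipotential, if_pos h, if_pos hule, ← EReal.coe_sub,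
        EReal.coe_le_coe_iff] at h0
      rw [inner_sub_left, humax] at h0
      have hux : ⟪u, x⟫ = c * ‖x‖ := by
        rw [hu, real_inner_smul_left, real_inner_self_eq_norm_sq]
        field_simp
      rw [hux] at h0
      have hyx : ⟪y, x⟫ = ⟪x, y⟫ := real_inner_comm x y
      have := cs_max (lm:=lm) x y
      rw [hyx] at h0
      exact le_antisymm (by linarith) (cs_max x y)
  · intro heq z
    by_cases hz : ‖z‖ ≤ lp
    · simp only [blurredPlasticBipotential, if_pos h, if_pos hz, ← EReal.coe_sub,
        EReal.coe_le_coe_iff]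
      rw [inner_sub_left]
      have h1 : ⟪z, x⟫ ≤ max lm ‖z‖ * ‖x‖ := by
        calc ⟪z,x⟫ ≤ ‖z‖ * ‖x‖ := real_inner_le_norm z x
          _ ≤ max lm ‖z‖ * ‖x‖ := by nlinarith [le_max_right lm ‖z‖, norm_nonneg x]
      have hyx : ⟪y, x⟫ = ⟪x, y⟫ := real_inner_comm x y
      rw [hyx, ← heq]
      linarith
    · simp only [blurredPlasticBipotential, if_pos h, if_neg hz, EReal.top_sub_coe]
      exact le_top

lemma not_subdiff2 (hlm : 0 < lm) (hlp : lm ≤ lp) {y : H} (h : ¬ ‖y‖ ≤ lp) (x : H) :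
    x ∉ ESubdiff (fun y' => B x y') y := by
  intro hs
  have h0 := hs 0
  have hz : ‖(0 : EuclideanSpace ℝ (Fin n))‖ ≤ lp := by
    rw [norm_zero]; linarith
  simp only [blurredPlasticBipotential, if_pos hz, if_neg h] at h0
  rw [show ((lm ⊔ ‖(0:EuclideanSpace ℝ (Fin n))‖) * ‖x‖ : ℝ) - (⊤:EReal) = ⊥ by simp] at h0
  simp at h0

lemma pairing_le_bp (x y : H) : ((⟪x, y⟫ : ℝ) : EReal) ≤ B x y := by
  refine le_trans ?_ (coe_g_le_bp x y)
  exact EReal.coe_le_coe_iff.mpr (cs_max x y)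

lemma graph_iff (hlm : 0 < lm) (hlp : lm ≤ lp) (x y : H) :
    B x y = ((⟪x, y⟫ : ℝ) : EReal) ↔
      ((x = 0 ∧ ‖y‖ < lm) ∨ ((lm ≤ ‖y‖ ∧ ‖y‖ ≤ lp) ∧ ∃ η : ℝ, 0 ≤ η ∧ x = η • y)) := by
  by_cases h : ‖y‖ ≤ lp
  · rw [bp_coe h, EReal.coe_eq_coe_iff]
    constructor
    · intro heq
      rcases eq_or_ne x 0 with rfl | hx
      · rcases lt_or_ge ‖y‖ lm with h' | h'
        · exact Or.inl ⟨rfl, h'⟩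
        · exact Or.inr ⟨⟨h', h⟩, 0, le_refl _, (zero_smul ℝ y).symm⟩
      · have hxn : 0 < ‖x‖ := norm_pos_iff.mpr hx
        have hcs : ⟪x, y⟫ ≤ ‖x‖ * ‖y‖ := real_inner_le_norm x y
        have hyc : ‖y‖ ≤ max lm ‖y‖ := le_max_right _ _
        have hceq : max lm ‖y‖ = ‖y‖ := by nlinarith
        have hlmy : lm ≤ ‖y‖ := by rw [← hceq]; exact le_max_left _ _
        have hyn : 0 < ‖y‖ := lt_of_lt_of_le hlm hlmy
        have heq2 : ⟪x, y⟫ = ‖x‖ * ‖y‖ := by rw [← heq, hceq]; ring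
        have hsm := (inner_eq_norm_mul_iff_real).mp heq2
        refine Or.inr ⟨⟨hlmy, h⟩, ‖x‖ / ‖y‖,
          div_nonneg (norm_nonneg x) (norm_nonneg y), ?_⟩
        have hx2 : x = (‖y‖)⁻¹ • (‖y‖ • x) := by
          rw [smul_smul, inv_mul_cancel₀ (ne_of_gt hyn), one_smul]
        conv_lhs => rw [hx2, hsm, smul_smul]
        rw [div_eq_inv_mul]
    · rintro (⟨rfl, hy⟩ | ⟨⟨h1, h2⟩, η, hη, rfl⟩)
      · simp
      · rw [max_eq_right h1, norm_smul, Real.norm_eq_abs, abs_of_nonneg hη,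
          real_inner_smul_left, real_inner_self_eq_norm_sq]
        ring
  · rw [bp_top h]
    constructor
    · intro heq
      exact absurd heq.symm (EReal.coe_ne_top _)
    · rintro (⟨rfl, hy⟩ | ⟨⟨h1, h2⟩, _⟩)
      · exact absurd (le_trans hy.le hlp) h
      · exact absurd h2 h

lemma condc (hlm : 0 < lm) (hlp : lm ≤ lp) (x y : H) :
    (y ∈ ESubdiff (fun x' => B x' y) x ↔ B x y = ((⟪x, y⟫ : ℝ) : EReal)) ∧
    (x ∈ ESubdiff (fun y' => B x y') y ↔ B x y = ((⟪x, y⟫ : ℝ) : EReal)) := by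
  by_cases h : ‖y‖ ≤ lp
  · rw [bp_coe h]
    constructor
    · rw [subdiff1 h, EReal.coe_eq_coe_iff]
    · rw [subdiff2 hlm hlp h, EReal.coe_eq_coe_iff]
  · rw [bp_top h]
    constructor
    · exact iff_of_false (not_subdiff1 h x) (fun he => (EReal.coe_ne_top _) he.symm)
    · exact iff_of_false (not_subdiff2 hlm hlp h x) (fun he => (EReal.coe_ne_top _) he.symm)

end Aux

/-- for `λ > 0`, `0 < ε < λ`, `λ₋ = λ − ε`, `λ₊ = λ + ε`, the function
`b(x,y) = max(λ₋,‖y‖)‖x‖ + χ_{B(λ₊)}(y)` is a bipotential on `ℝⁿ` whose graph is the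
blurred plastic law `M = {(0,y) : ‖y‖ < λ₋} ∪ {(x,y) : λ₋ ≤ ‖y‖ ≤ λ₊, ∃ η ≥ 0, x = η y}`;
in particular `(x,y) ∈ M` iff `y ∈ ∂ b(·,y)(x)`. -/

theorem blurredPlastic_isBipotential (n : ℕ) (lam eps : ℝ)
    (hlam : 0 < lam) (heps : 0 < eps) (hlt : eps < lam) :
    IsBipotential (blurredPlasticBipotential n (lam - eps) (lam + eps)) ∧
    BipGraph (blurredPlasticBipotential n (lam - eps) (lam + eps)) =
      ({p : EuclideanSpace ℝ (Fin n) × EuclideanSpace ℝ (Fin n) |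
          p.1 = 0 ∧ ‖p.2‖ < lam - eps} ∪
       {p : EuclideanSpace ℝ (Fin n) × EuclideanSpace ℝ (Fin n) |
          (lam - eps ≤ ‖p.2‖ ∧ ‖p.2‖ ≤ lam + eps) ∧ ∃ η : ℝ, 0 ≤ η ∧ p.1 = η • p.2}) ∧
    ∀ x y : EuclideanSpace ℝ (Fin n),
      ((x, y) ∈
        ({p : EuclideanSpace ℝ (Fin n) × EuclideanSpace ℝ (Fin n) |
            p.1 = 0 ∧ ‖p.2‖ < lam - eps} ∪
         {p : EuclideanSpace ℝ (Fin n) × EuclideanSpace ℝ (Fin n) |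
            (lam - eps ≤ ‖p.2‖ ∧ ‖p.2‖ ≤ lam + eps) ∧ ∃ η : ℝ, 0 ≤ η ∧ p.1 = η • p.2})
        ↔ y ∈ ESubdiff (fun x' => blurredPlasticBipotential n (lam - eps) (lam + eps) x' y) x) := by
  have hlm : 0 < lam - eps := by linarith
  have hlp : lam - eps ≤ lam + eps := by linarith
  refine ⟨⟨fun y => ⟨convex_x y, lsc_x y⟩, fun x => ⟨convex_y hlm.le x, lsc_y x⟩,
    fun x y => pairing_le_bp x y, fun x y => condc hlm hlp x y⟩, ?_, ?_⟩
  · ext p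
    simp only [BipGraph, Set.mem_setOf_eq, Set.mem_union]
    exact graph_iff hlm hlp p.1 p.2
  · intro x y
    simp only [Set.mem_union, Set.mem_setOf_eq]
    rw [(condc hlm hlp x y).1, graph_iff hlm hlp x y]
end

section
/- Let 0 < μ₋ ≤ μ₊. For all x = (x_n, x_t) and y = (y_n, y_t) in X = ℝ × ℝ², the infimum inf { μ y_n ‖x_t‖ + χ_{K_μ}(y) : μ ∈ [μ₋, μ₊] } equals: +∞ if ‖y_t‖ > μ₊ y_n; ‖y_t‖·‖x_t‖ if μ₋ y_n ≤ ‖y_t‖ ≤ μ₊ y_n; and μ₋ y_n ‖x_t‖ if ‖y_t‖ ≤ μ₋ y_n. Equivalently, this infimum equals max(μ₋ y_n, ‖y_t‖)·‖x_t‖ + χ_{K_{μ₊}}(y). -/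
open scoped RealInnerProductSpace

/-- The contact space `X = ℝ × ℝ²`, elements `x = (x_n, x_t)`. -/
abbrev ContactSpace := ℝ × EuclideanSpace ℝ (Fin 2)

/-- The Coulomb family `μ ↦ μ y_n ‖x_t‖ + χ_{K_μ}(y)`, with values in `ℝ ∪ {+∞}`,
where `K_μ = {(y_n, y_t) : ‖y_t‖ ≤ μ y_n}` is Coulomb's cone. -/
noncomputable def coulombFamily (mu : ℝ) (x y : ContactSpace) : EReal :=
  ((mu * y.1 * ‖x.2‖ : ℝ) : EReal) + (if ‖y.2‖ ≤ mu * y.1 then (0 : EReal) else ⊤)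

/-- for `0 < μ₋ ≤ μ₊`, the infimum over `μ ∈ [μ₋, μ₊]` of
`μ y_n ‖x_t‖ + χ_{K_μ}(y)` equals `+∞` if `‖y_t‖ > μ₊ y_n`, equals `‖y_t‖·‖x_t‖` if
`μ₋ y_n ≤ ‖y_t‖ ≤ μ₊ y_n`, and equals `μ₋ y_n ‖x_t‖` if `‖y_t‖ ≤ μ₋ y_n`; equivalently,
it equals `max(μ₋ y_n, ‖y_t‖)·‖x_t‖ + χ_{K_{μ₊}}(y)`. -/
theorem inf_coulomb_family (mm mp : ℝ) (h0 : 0 < mm) (hle : mm ≤ mp)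
    (x y : ContactSpace) :
    (mp * y.1 < ‖y.2‖ → (⨅ mu : Set.Icc mm mp, coulombFamily mu x y) = ⊤) ∧
    (mm * y.1 ≤ ‖y.2‖ → ‖y.2‖ ≤ mp * y.1 →
      (⨅ mu : Set.Icc mm mp, coulombFamily mu x y) = ((‖y.2‖ * ‖x.2‖ : ℝ) : EReal)) ∧
    (‖y.2‖ ≤ mm * y.1 →
      (⨅ mu : Set.Icc mm mp, coulombFamily mu x y) = ((mm * y.1 * ‖x.2‖ : ℝ) : EReal)) ∧
    (⨅ mu : Set.Icc mm mp, coulombFamily mu x y) =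
      ((max (mm * y.1) ‖y.2‖ * ‖x.2‖ : ℝ) : EReal) +
        (if ‖y.2‖ ≤ mp * y.1 then (0 : EReal) else ⊤) := by
  have hx : (0:ℝ) ≤ ‖x.2‖ := norm_nonneg _
  have hy2 : (0:ℝ) ≤ ‖y.2‖ := norm_nonneg _
  -- universal lower bound
  have hlb : ∀ mu : Set.Icc mm mp,
      ((max (mm * y.1) ‖y.2‖ * ‖x.2‖ : ℝ) : EReal) ≤ coulombFamily mu x y := by
    rintro ⟨mu, hm1, hm2⟩
    by_cases hc : ‖y.2‖ ≤ mu * y.1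
    · have hmu0 : 0 < mu := lt_of_lt_of_le h0 hm1
      have hy1 : 0 ≤ y.1 := by nlinarith
      have hmax : max (mm * y.1) ‖y.2‖ ≤ mu * y.1 :=
        max_le (mul_le_mul_of_nonneg_right hm1 hy1) hc
      simp only [coulombFamily, hc, if_true, add_zero]
      exact_mod_cast mul_le_mul_of_nonneg_right hmax hx
    · simp only [coulombFamily, hc, if_false]
      rw [EReal.add_top_of_ne_bot (EReal.coe_ne_bot _)]
      exact le_top
  -- part 1
  have h1 : mp * y.1 < ‖y.2‖ → (⨅ mu : Set.Icc mm mp, coulombFamily mu x y) = ⊤ := by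
    intro h
    rw [iInf_eq_top]
    rintro ⟨mu, hm1, hm2⟩
    have hmu0 : 0 < mu := lt_of_lt_of_le h0 hm1
    have hc : ¬ ‖y.2‖ ≤ mu * y.1 := by
      push_neg
      rcases le_or_gt y.1 0 with hy | hy
      · rcases hy.lt_or_eq with hy' | hy'
        · exact lt_of_lt_of_le (mul_neg_of_pos_of_neg hmu0 hy') hy2
        · simpa [hy'] using h
      · exact lt_of_le_of_lt (mul_le_mul_of_nonneg_right hm2 hy.le) h
    simp only [coulombFamily, hc, if_false]
    exact EReal.add_top_of_ne_bot (EReal.coe_ne_bot _)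
  -- part 3
  have h3 : ‖y.2‖ ≤ mm * y.1 →
      (⨅ mu : Set.Icc mm mp, coulombFamily mu x y) = ((mm * y.1 * ‖x.2‖ : ℝ) : EReal) := by
    intro h
    have hmax : max (mm * y.1) ‖y.2‖ = mm * y.1 := max_eq_left h
    refine le_antisymm ?_ ?_
    · refine iInf_le_of_le ⟨mm, le_refl _, hle⟩ ?_
      simp [coulombFamily, h]
    · refine le_iInf fun mu => ?_
      have := hlb mu
      rwa [hmax] at this
  -- part 2
  have h2 : mm * y.1 ≤ ‖y.2‖ → ‖y.2‖ ≤ mp * y.1 →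
      (⨅ mu : Set.Icc mm mp, coulombFamily mu x y) = ((‖y.2‖ * ‖x.2‖ : ℝ) : EReal) := by
    intro ha hb
    have hmax : max (mm * y.1) ‖y.2‖ = ‖y.2‖ := max_eq_right ha
    refine le_antisymm ?_ ?_
    · rcases eq_or_lt_of_le (hy2.trans hb) with hy1 | hy1
      · -- mp * y.1 = 0, so ‖y.2‖ = 0
        have hz : ‖y.2‖ = 0 := le_antisymm (hb.trans hy1.symm.le) hy2
        have hz1 : y.1 = 0 := by
          have hmp : 0 < mp := lt_of_lt_of_le h0 hle
          nlinarith [hy1.symm]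
        refine iInf_le_of_le ⟨mm, le_refl _, hle⟩ ?_
        simp [coulombFamily, hz, hz1]
      · -- y.1 > 0, take mu = ‖y.2‖ / y.1
        have hy1' : 0 < y.1 := by
          rcases lt_or_ge 0 y.1 with h' | h'
          · exact h'
          · exfalso; nlinarith
        have hm1 : mm ≤ ‖y.2‖ / y.1 := (le_div_iff₀ hy1').2 ha
        have hm2 : ‖y.2‖ / y.1 ≤ mp := (div_le_iff₀ hy1').2 hb
        refine iInf_le_of_le ⟨‖y.2‖ / y.1, hm1, hm2⟩ ?_
        have hval : ‖y.2‖ / y.1 * y.1 = ‖y.2‖ := div_mul_cancel₀ _ hy1'.ne'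
        simp [coulombFamily, hval]
    · refine le_iInf fun mu => ?_
      have := hlb mu
      rwa [hmax] at this
  refine ⟨h1, h2, h3, ?_⟩
  by_cases hb : ‖y.2‖ ≤ mp * y.1
  · rw [if_pos hb, add_zero]
    rcases le_or_gt ‖y.2‖ (mm * y.1) with ha | ha
    · rw [max_eq_left ha, h3 ha]
    · rw [max_eq_right ha.le, h2 ha.le hb]
  · rw [if_neg hb, h1 (not_le.1 hb),
      EReal.add_top_of_ne_bot (EReal.coe_ne_bot _)]
end
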